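/- Let G be a hypergraph and A, B ⊆ E(G). Then itw(A ∪ B) ≤ max(itw(A), itw(B)) + min(λ(A), λ(B)). -/

import Mathlib

/-!
Put `X = int A` and `Y = int B \ V(A)`. Every vertex of `int (A ∪ B)` lies in `X`, in `Y` or in
`bd A`, and no edge of the primal graph joins `X` to `Y`, since a hyperedge meeting `int A` belongs
to `A`. Gluing optimal tree decompositions of `X` and of `Y ⊆ int B` by one edge between the two
trees and adding `bd A` to every bag gives a tree decomposition of `int (A ∪ B)` of width at most
`max (itw A) (itw B) + λ A`; by symmetry the same holds with `λ B`.
-/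

open scoped Classical

namespace Paper

variable {V : Type} {E : Type}

/-- Vertices covered by a set of hyperedges. -/
noncomputable def Vs (F : E → Finset V) (A : Finset E) : Finset V := A.biUnion F

/-- Boundary of `A` relative to a ground set of hyperedges. -/
noncomputable def bdIn (F : E → Finset V) (ground A : Finset E) : Finset V :=
  Vs F A ∩ Vs F (ground \ A)

/-- Boundary size. -/
noncomputable def lamIn (F : E → Finset V) (ground A : Finset E) : ℕ :=
  (bdIn F ground A).card

/-- Interior. -/
noncomputable def intIn (F : E → Finset V) (ground A : Finset E) : Finset V :=
  Vs F A \ bdIn F ground A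

/-- A set of hyperedges is well-linked. -/
def WellLinkedIn (F : E → Finset V) (ground A : Finset E) : Prop :=
  ∀ A1 A2 : Finset E, A1 ∪ A2 = A → A1 ∩ A2 = ∅ →
    lamIn F ground A ≤ lamIn F ground A1 ∨ lamIn F ground A ≤ lamIn F ground A2

/-- A nonempty set of hyperedges is internally connected. -/
def InternallyConnectedIn (F : E → Finset V) (ground A : Finset E) : Prop :=
  A.Nonempty ∧ ¬ ∃ B1 B2 : Finset E, B1 ∪ B2 = A ∧ B1 ∩ B2 = ∅ ∧
    B1.Nonempty ∧ B2.Nonempty ∧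
    bdIn F ground B1 ⊆ bdIn F ground A ∧ bdIn F ground B2 ⊆ bdIn F ground A

/-- Internal component: an inclusion-maximal internally connected subset. -/
def InternalComponentIn (F : E → Finset V) (ground B B' : Finset E) : Prop :=
  B' ⊆ B ∧ InternallyConnectedIn F ground B' ∧
    ∀ B'' : Finset E, B' ⊆ B'' → B'' ⊆ B → InternallyConnectedIn F ground B'' → B'' = B'

/-- A tree decomposition of the graph with adjacency `Adj` induced on vertex set `s`. -/
structure TreeDecompOn (Adj : V → V → Prop) (s : Finset V) where
  ι : Type
  fin : Fintype ι
  tr : SimpleGraph ι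
  isTree : tr.IsTree
  bag : ι → Finset V
  bag_sub : ∀ i, bag i ⊆ s
  cover_v : ∀ v ∈ s, ∃ i, v ∈ bag i
  cover_e : ∀ u ∈ s, ∀ v ∈ s, Adj u v → ∃ i, u ∈ bag i ∧ v ∈ bag i
  conn : ∀ v ∈ s, (tr.induce {i | v ∈ bag i}).Connected

/-- Treewidth (an integer, `-1` for the empty graph) of the graph
with adjacency `Adj` induced on the vertex set `s`. -/
noncomputable def tw (Adj : V → V → Prop) (s : Finset V) : ℤ :=
  sInf {k : ℤ | ∃ D : TreeDecompOn Adj s, ∀ i, ((D.bag i).card : ℤ) ≤ k + 1}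

/-- Minimum size of a treewidth-`η`-modulator of the graph induced on `s`. -/
noncomputable def twmodOn (Adj : V → V → Prop) (s : Finset V) (η : ℕ) : ℕ :=
  sInf {n : ℕ | ∃ X : Finset V, X ⊆ s ∧ X.card ≤ n ∧ tw Adj (s \ X) ≤ (η : ℤ)}

/-- Adjacency of the primal graph of a hypergraph. -/
def primalAdj (F : E → Finset V) : V → V → Prop :=
  fun u v => u ≠ v ∧ ∃ e : E, u ∈ F e ∧ v ∈ F e

/-- Internal treewidth of a set of hyperedges. -/
noncomputable def itw [Fintype E] (F : E → Finset V) (A : Finset E) : ℤ :=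
  tw (primalAdj F) (intIn F Finset.univ A)

/-- The hypergraph given by `F` is (isomorphic to) the support hypergraph of `G`:
it has exactly one hyperedge `{v}` for each vertex `v` and exactly one hyperedge
`{u, v}` for each edge `uv`, and no other hyperedges. -/
def IsSupport (G : SimpleGraph V) (F : E → Finset V) : Prop :=
  (∀ e : E, (∃ v : V, F e = {v}) ∨ (∃ u v : V, G.Adj u v ∧ F e = {u, v})) ∧
  (∀ v : V, ∃! e : E, F e = {v}) ∧
  (∀ u v : V, G.Adj u v → ∃! e : E, F e = ({u, v} : Finset V))

/-- `H` is a topological minor of `G` using only vertices in `s`. -/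
def IsTopMinorOn {α β : Type} (H : SimpleGraph α) (G : SimpleGraph β) (s : Set β) : Prop :=
  ∃ φ : α → β, (∀ a, φ a ∈ s) ∧ Function.Injective φ ∧
    ∃ P : ∀ u v : α, H.Adj u v → G.Walk (φ u) (φ v),
      (∀ u v (h : H.Adj u v), (P u v h).IsPath) ∧
      (∀ u v (h : H.Adj u v), ∀ w ∈ (P u v h).support, w ∈ s) ∧
      (∀ u v (h : H.Adj u v) (w : β), w ∈ (P u v h).support → w ≠ φ u → w ≠ φ v →
        ∀ a : α, φ a ≠ w) ∧
      (∀ u v u' v' (h : H.Adj u v) (h' : H.Adj u' v'),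
        (s(u, v) : Sym2 α) ≠ s(u', v') →
        ∀ w : β, w ∈ (P u v h).support → w ∈ (P u' v' h').support → w = φ u ∨ w = φ v)

/-- `H` is a topological minor of `G`. -/
def IsTopMinor {α β : Type} (H : SimpleGraph α) (G : SimpleGraph β) : Prop :=
  IsTopMinorOn H G Set.univ

/-- A rooted superbranch decomposition of a hypergraph with hyperedge type `E`:
a finite rooted tree (given by a parent map) whose leaves are in bijection with `E`
and in which every non-leaf node has at least two children. -/
structure SBD (E : Type) [Fintype E] where
  ι : Type
  fin : Fintype ι
  root : ι
  par : ι → ι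
  par_root : par root = root
  reach : ∀ i : ι, ∃ n : ℕ, par^[n] i = root
  leafMap : E → ι
  inj : Function.Injective leafMap
  map_leaf : ∀ (e : E) (j : ι), par j = leafMap e → j = leafMap e
  leaf_surj : ∀ i : ι, (∀ j : ι, par j = i → j = i) → ∃ e : E, leafMap e = i
  branch : ∀ i : ι, (∃ j : ι, par j = i ∧ j ≠ i) → 2 ≤ {j : ι | par j = i ∧ j ≠ i}.ncard

/-- The set `L[t]` of hyperedges assigned to leaves below `t`. -/
noncomputable def SBD.Lset [Fintype E] (T : SBD E) (t : T.ι) : Finset E :=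
  Finset.univ.filter fun e => ∃ n : ℕ, T.par^[n] (T.leafMap e) = t

/-- The children of the root. -/
noncomputable def SBD.chd [Fintype E] (T : SBD E) : Finset T.ι :=
  letI := T.fin
  Finset.univ.filter fun j => T.par j = T.root ∧ j ≠ T.root

/-- The vertex sets of the hyperedges of the torso of the root:
the hyperedge corresponding to a child `t` has vertex set `bd(L[t])`. -/
noncomputable def SBD.Ft [Fintype E] (T : SBD E) (F : E → Finset V) : T.ι → Finset V :=
  fun t => bdIn F Finset.univ (T.Lset t)

/-- Downwards well-linkedness of a superbranch decomposition. -/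
def DownWL [Fintype E] (F : E → Finset V) (T : SBD E) : Prop :=
  ∀ t : T.ι, WellLinkedIn F Finset.univ (T.Lset t)

/-- The adhesion size of the superbranch decomposition is at most `α`. -/
def AdhLE [Fintype E] (F : E → Finset V) (T : SBD E) (α : ℕ) : Prop :=
  ∀ t : T.ι, t ≠ T.root → lamIn F Finset.univ (T.Lset t) ≤ α

/-- A rooted tree decomposition (given by a root and a tree decomposition). -/
structure RTreeDecompOn (Adj : V → V → Prop) (s : Finset V) extends TreeDecompOn Adj s where
  root : ι

/-- A `(k, c)`-protrusion decomposition exists. -/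
def HasProtrusionDecomp (Adj : V → V → Prop) (s : Finset V) (k : ℝ) (c : ℕ) : Prop :=
  ∃ D : RTreeDecompOn Adj s,
    ((D.bag D.root).card : ℝ) ≤ k ∧
    ((D.tr.neighborSet D.root).ncard : ℝ) ≤ k ∧
    ∀ i, i ≠ D.root → (D.bag i).card ≤ c

/-- A finite simple graph on the vertex universe `ℕ`. -/
structure FGraph where
  verts : Finset ℕ
  Adj : ℕ → ℕ → Prop
  symm : ∀ u v, Adj u v → Adj v u
  loopless : ∀ u, ¬ Adj u u
  supp : ∀ u v, Adj u v → u ∈ verts ∧ v ∈ verts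

/-- The `SimpleGraph` of an `FGraph`. -/
def FGraph.toSG (G : FGraph) : SimpleGraph ℕ where
  Adj := G.Adj
  symm := ⟨fun u v h => G.symm u v h⟩
  loopless := ⟨fun u h => G.loopless u h⟩

/-- A rooted tree decomposition, with the rooted tree given by a parent map and
connectivity phrased for rooted trees. -/
structure RootedTD (Adj : V → V → Prop) (s : Finset V) where
  ι : Type
  fin : Fintype ι
  root : ι
  par : ι → ι
  par_root : par root = root
  reach : ∀ i : ι, ∃ n : ℕ, par^[n] i = root
  bag : ι → Finset V
  bag_sub : ∀ i, bag i ⊆ s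
  cover_v : ∀ v ∈ s, ∃ i, v ∈ bag i
  cover_e : ∀ u ∈ s, ∀ v ∈ s, Adj u v → ∃ i, u ∈ bag i ∧ v ∈ bag i
  conn : ∀ v ∈ s, ∃ m : ι, v ∈ bag m ∧ ∀ i : ι, v ∈ bag i →
    ∃ n : ℕ, par^[n] i = m ∧ ∀ l ≤ n, v ∈ bag (par^[l] i)

end Paper

namespace SimpleGraph

variable {α β : Type*} {G : SimpleGraph α} {H : SimpleGraph β}

lemma IsTree.sum_sup_edge [Finite α] [Finite β] (hG : G.IsTree) (hH : H.IsTree)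
    (a : α) (b : β) :
    ((G ⊕g H) ⊔ edge (Sum.inl a) (Sum.inr b)).IsTree := by
  rw [isTree_iff_connected_and_card] at hG hH ⊢
  refine ⟨hG.1.sum_sup_edge hH.1, ?_⟩
  have hnew : s(Sum.inl a, Sum.inr b) ∉ (G ⊕g H).edgeSet := by simp
  rw [edgeSet_sup, edgeSet_edge_of_ne Sum.inl_ne_inr, Set.union_singleton, Nat.card_coe_set_eq,
    Set.ncard_insert_of_notMem hnew, ← Nat.card_coe_set_eq, Nat.card_congr edgeSetSumEquiv,
    Nat.card_sum, Nat.card_sum]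
  omega

lemma Connected.induce_image {s : Set α} (φ : G →g H) (h : (G.induce s).Connected) :
    (H.induce (φ '' s)).Connected :=
  h.map (induceHom φ (Set.mapsTo_image φ s))
    (by rintro ⟨_, x, hx, rfl⟩; exact ⟨⟨x, hx⟩, rfl⟩)

lemma Connected.induce_univ (h : G.Connected) : (G.induce Set.univ).Connected :=
  h.map (induceUnivIso G).symm.toHom (induceUnivIso G).symm.surjective

end SimpleGraph

namespace Paper

noncomputable section

namespace TreeDecompOn

variable {V : Type} {Adj : V → V → Prop} {s t : Finset V}

lemma nonempty (D : TreeDecompOn Adj s) : Nonempty D.ι := D.isTree.connected.nonempty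

def single (Adj : V → V → Prop) (s : Finset V) : TreeDecompOn Adj s where
  ι := Unit
  fin := inferInstance
  tr := ⊥
  isTree := .of_subsingleton
  bag _ := s
  bag_sub _ := subset_rfl
  cover_v _ hv := ⟨(), hv⟩
  cover_e _ hu _ hv _ := ⟨(), hu, hv⟩
  conn v hv := by
    have hall : {_i : Unit | v ∈ s} = Set.univ := by ext; simp [hv]
    rw [hall]
    exact SimpleGraph.IsTree.of_subsingleton.connected.induce_univ

def restrict (D : TreeDecompOn Adj s) (hts : t ⊆ s) : TreeDecompOn Adj t where
  ι := D.ι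
  fin := D.fin
  tr := D.tr
  isTree := D.isTree
  bag i := D.bag i ∩ t
  bag_sub _ := Finset.inter_subset_right
  cover_v v hv := (D.cover_v v (hts hv)).imp fun _ hi => Finset.mem_inter.2 ⟨hi, hv⟩
  cover_e u hu v hv huv := (D.cover_e u (hts hu) v (hts hv) huv).imp fun _ h =>
    ⟨Finset.mem_inter.2 ⟨h.1, hu⟩, Finset.mem_inter.2 ⟨h.2, hv⟩⟩
  conn v hv := by
    have hsame : {i | v ∈ D.bag i ∩ t} = {i | v ∈ D.bag i} := by ext; simp [hv]
    rw [hsame]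
    exact D.conn v (hts hv)

lemma card_bag_restrict_le (D : TreeDecompOn Adj s) (hts : t ⊆ s) (i : D.ι) :
    ((D.restrict hts).bag i).card ≤ (D.bag i).card :=
  Finset.card_le_card Finset.inter_subset_left

def unionBags (D : TreeDecompOn Adj s) (S : Finset V) : TreeDecompOn Adj (s ∪ S) where
  ι := D.ι
  fin := D.fin
  tr := D.tr
  isTree := D.isTree
  bag i := D.bag i ∪ S
  bag_sub i := Finset.union_subset_union (D.bag_sub i) subset_rfl
  cover_v v hv := by
    have := D.nonempty
    rcases Finset.mem_union.1 hv with hv | hv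
    · exact (D.cover_v v hv).imp fun _ hi => Finset.mem_union_left _ hi
    · exact ⟨Classical.arbitrary _, Finset.mem_union_right _ hv⟩
  cover_e u hu v hv huv := by
    have := D.nonempty
    rcases Finset.mem_union.1 hu with hu | hu <;> rcases Finset.mem_union.1 hv with hv | hv
    · exact (D.cover_e u hu v hv huv).imp fun _ h =>
        ⟨Finset.mem_union_left _ h.1, Finset.mem_union_left _ h.2⟩
    · exact (D.cover_v u hu).imp fun _ hi =>
        ⟨Finset.mem_union_left _ hi, Finset.mem_union_right _ hv⟩
    · exact (D.cover_v v hv).imp fun _ hi =>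
        ⟨Finset.mem_union_right _ hu, Finset.mem_union_left _ hi⟩
    · exact ⟨Classical.arbitrary _, Finset.mem_union_right _ hu, Finset.mem_union_right _ hv⟩
  conn v hv := by
    by_cases hvS : v ∈ S
    · have hall : {i | v ∈ D.bag i ∪ S} = Set.univ := by ext; simp [hvS]
      rw [hall]
      exact D.isTree.connected.induce_univ
    · have hsame : {i | v ∈ D.bag i ∪ S} = {i | v ∈ D.bag i} := by ext; simp [hvS]
      rw [hsame]
      exact D.conn v ((Finset.mem_union.1 hv).resolve_right hvS)

lemma card_bag_unionBags_le (D : TreeDecompOn Adj s) (S : Finset V) (i : D.ι) :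
    ((D.unionBags S).bag i).card ≤ (D.bag i).card + S.card :=
  Finset.card_union_le _ _

def glue (D₁ : TreeDecompOn Adj s) (D₂ : TreeDecompOn Adj t) (hst : Disjoint s t)
    (hsep : ∀ u ∈ s, ∀ v ∈ t, ¬Adj u v ∧ ¬Adj v u) : TreeDecompOn Adj (s ∪ t) where
  ι := D₁.ι ⊕ D₂.ι
  fin := letI := D₁.fin; letI := D₂.fin; inferInstance
  tr := (D₁.tr ⊕g D₂.tr) ⊔
    SimpleGraph.edge (Sum.inl D₁.nonempty.some) (Sum.inr D₂.nonempty.some)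
  isTree := by
    have := D₁.fin
    have := D₂.fin
    exact D₁.isTree.sum_sup_edge D₂.isTree _ _
  bag := Sum.elim D₁.bag D₂.bag
  bag_sub := by
    rintro (i | i)
    · exact (D₁.bag_sub i).trans Finset.subset_union_left
    · exact (D₂.bag_sub i).trans Finset.subset_union_right
  cover_v v hv := by
    rcases Finset.mem_union.1 hv with hv | hv
    · obtain ⟨i, hi⟩ := D₁.cover_v v hv
      exact ⟨Sum.inl i, hi⟩
    · obtain ⟨i, hi⟩ := D₂.cover_v v hv
      exact ⟨Sum.inr i, hi⟩
  cover_e u hu v hv huv := by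
    rcases Finset.mem_union.1 hu with hu | hu <;> rcases Finset.mem_union.1 hv with hv | hv
    · obtain ⟨i, hi⟩ := D₁.cover_e u hu v hv huv
      exact ⟨Sum.inl i, hi⟩
    · exact absurd huv (hsep u hu v hv).1
    · exact absurd huv (hsep v hv u hu).2
    · obtain ⟨i, hi⟩ := D₂.cover_e u hu v hv huv
      exact ⟨Sum.inr i, hi⟩
  conn v hv := by
    rcases Finset.mem_union.1 hv with hv | hv
    · have hnot : v ∉ t := Finset.disjoint_left.1 hst hv
      have himage :
          {x | v ∈ Sum.elim D₁.bag D₂.bag x} = Sum.inl '' {i | v ∈ D₁.bag i} := by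
        ext (i | i)
        · simp
        · simpa using fun h => hnot (D₂.bag_sub i h)
      rw [himage]
      exact (D₁.conn v hv).induce_image
        ((SimpleGraph.Hom.ofLE le_sup_left).comp SimpleGraph.Embedding.sumInl.toHom)
    · have hnot : v ∉ s := Finset.disjoint_right.1 hst hv
      have himage :
          {x | v ∈ Sum.elim D₁.bag D₂.bag x} = Sum.inr '' {i | v ∈ D₂.bag i} := by
        ext (i | i)
        · simpa using fun h => hnot (D₁.bag_sub i h)
        · simp
      rw [himage]
      exact (D₂.conn v hv).induce_image
        ((SimpleGraph.Hom.ofLE le_sup_left).comp SimpleGraph.Embedding.sumInr.toHom)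

end TreeDecompOn

section Treewidth

variable {V : Type} {Adj : V → V → Prop} {s t S : Finset V}

lemma bddBelow_tw (Adj : V → V → Prop) (s : Finset V) :
    BddBelow {k : ℤ | ∃ D : TreeDecompOn Adj s, ∀ i, ((D.bag i).card : ℤ) ≤ k + 1} := by
  refine ⟨-1, ?_⟩
  rintro k ⟨D, hD⟩
  have := hD D.nonempty.some
  omega

lemma exists_treeDecomp_card_bag_le_tw (Adj : V → V → Prop) (s : Finset V) :
    ∃ D : TreeDecompOn Adj s, ∀ i, ((D.bag i).card : ℤ) ≤ tw Adj s + 1 := by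
  refine Int.csInf_mem ?_ (bddBelow_tw Adj s)
  exact ⟨s.card - 1, TreeDecompOn.single Adj s, fun _ => by simp [TreeDecompOn.single]⟩

lemma tw_le_of_treeDecomp {k : ℤ} (D : TreeDecompOn Adj s)
    (h : ∀ i, ((D.bag i).card : ℤ) ≤ k + 1) : tw Adj s ≤ k :=
  csInf_le (bddBelow_tw Adj s) ⟨D, h⟩

lemma tw_mono (hts : t ⊆ s) : tw Adj t ≤ tw Adj s := by
  obtain ⟨D, hD⟩ := exists_treeDecomp_card_bag_le_tw Adj s
  refine tw_le_of_treeDecomp (D.restrict hts) fun i => ?_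
  have := D.card_bag_restrict_le hts i
  have := hD i
  omega

lemma tw_union_le_add_card : tw Adj (s ∪ S) ≤ tw Adj s + S.card := by
  obtain ⟨D, hD⟩ := exists_treeDecomp_card_bag_le_tw Adj s
  refine tw_le_of_treeDecomp (D.unionBags S) fun i => ?_
  have := D.card_bag_unionBags_le S i
  have := hD i
  omega

lemma tw_union_le_max (hst : Disjoint s t)
    (hsep : ∀ u ∈ s, ∀ v ∈ t, ¬Adj u v ∧ ¬Adj v u) :
    tw Adj (s ∪ t) ≤ max (tw Adj s) (tw Adj t) := by
  obtain ⟨D₁, hD₁⟩ := exists_treeDecomp_card_bag_le_tw Adj s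
  obtain ⟨D₂, hD₂⟩ := exists_treeDecomp_card_bag_le_tw Adj t
  refine tw_le_of_treeDecomp (D₁.glue D₂ hst hsep) ?_
  rintro (i | i)
  · exact (hD₁ i).trans (by gcongr; exact le_max_left _ _)
  · exact (hD₂ i).trans (by gcongr; exact le_max_right _ _)

end Treewidth

end

section Hypergraph

variable {V E : Type} {F : E → Finset V} {A B : Finset E} {u v : V}

lemma mem_Vs : v ∈ Vs F A ↔ ∃ e ∈ A, v ∈ F e := Finset.mem_biUnion

lemma intIn_subset_Vs (ground : Finset E) : intIn F ground A ⊆ Vs F A := Finset.sdiff_subset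

lemma primalAdj_comm : primalAdj F u v ↔ primalAdj F v u := by
  simp only [primalAdj, ne_comm, and_comm]

variable [Fintype E]

lemma mem_bdIn_univ : v ∈ bdIn F Finset.univ A ↔ v ∈ Vs F A ∧ ∃ e ∉ A, v ∈ F e := by
  simp [bdIn, mem_Vs]

lemma mem_intIn_univ : v ∈ intIn F Finset.univ A ↔ v ∈ Vs F A ∧ ∀ e ∉ A, v ∉ F e := by
  rw [intIn, Finset.mem_sdiff, mem_bdIn_univ]
  grind

lemma not_primalAdj_of_mem_intIn (hu : u ∈ intIn F Finset.univ A) (hv : v ∉ Vs F A) :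
    ¬primalAdj F u v := by
  rintro ⟨-, e, hue, hve⟩
  have heA : e ∈ A := by_contra fun heA => (mem_intIn_univ.1 hu).2 e heA hue
  exact hv (mem_Vs.2 ⟨e, heA, hve⟩)

lemma intIn_union_subset :
    intIn F Finset.univ (A ∪ B) ⊆
      (intIn F Finset.univ A ∪ (intIn F Finset.univ B \ Vs F A)) ∪ bdIn F Finset.univ A := by
  intro v hv
  by_cases hvA : v ∈ Vs F A
  · by_cases hbd : v ∈ bdIn F Finset.univ A
    · exact Finset.mem_union_right _ hbd
    · exact Finset.mem_union_left _ (Finset.mem_union_left _ (Finset.mem_sdiff.2 ⟨hvA, hbd⟩))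
  · obtain ⟨hvAB, hout⟩ := mem_intIn_univ.1 hv
    obtain ⟨e, he, hve⟩ := mem_Vs.1 hvAB
    refine Finset.mem_union_left _ (Finset.mem_union_right _ (Finset.mem_sdiff.2 ⟨?_, hvA⟩))
    have heB : e ∈ B :=
      (Finset.mem_union.1 he).resolve_left fun heA => hvA (mem_Vs.2 ⟨e, heA, hve⟩)
    refine mem_intIn_univ.2 ⟨mem_Vs.2 ⟨e, heB, hve⟩, fun e' he'B hve' => ?_⟩
    by_cases he'A : e' ∈ A
    · exact hvA (mem_Vs.2 ⟨e', he'A, hve'⟩)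
    · exact hout e' (by simp [he'A, he'B]) hve'

lemma itw_union_le_add_lamIn_left (F : E → Finset V) (A B : Finset E) :
    itw F (A ∪ B) ≤ max (itw F A) (itw F B) + lamIn F Finset.univ A := by
  set X := intIn F Finset.univ A
  set Y := intIn F Finset.univ B \ Vs F A
  have hXY : Disjoint X Y := Finset.disjoint_sdiff.mono_left (intIn_subset_Vs _)
  have hsep : ∀ u ∈ X, ∀ v ∈ Y, ¬primalAdj F u v ∧ ¬primalAdj F v u := fun u hu v hv =>
    have huv := not_primalAdj_of_mem_intIn hu (Finset.mem_sdiff.1 hv).2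
    ⟨huv, primalAdj_comm.not.1 huv⟩
  calc itw F (A ∪ B)
      ≤ tw (primalAdj F) ((X ∪ Y) ∪ bdIn F Finset.univ A) := tw_mono intIn_union_subset
    _ ≤ tw (primalAdj F) (X ∪ Y) + lamIn F Finset.univ A := tw_union_le_add_card
    _ ≤ max (itw F A) (tw (primalAdj F) Y) + lamIn F Finset.univ A := by
      gcongr
      exact tw_union_le_max hXY hsep
    _ ≤ max (itw F A) (itw F B) + lamIn F Finset.univ A := by
      gcongr
      exact tw_mono Finset.sdiff_subset

end Hypergraph

theorem statement1_general {V E : Type} [Fintype E] (F : E → Finset V)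
    (A B : Finset E) :
    itw F (A ∪ B) ≤
      max (itw F A) (itw F B) +
        (min (lamIn F Finset.univ A) (lamIn F Finset.univ B) : ℤ) := by
  have hA := itw_union_le_add_lamIn_left F A B
  have hB := itw_union_le_add_lamIn_left F B A
  rw [Finset.union_comm, max_comm] at hB
  rw [← min_add_add_left]
  exact le_min hA hB

/-- `itw (A ∪ B) ≤ max (itw A) (itw B) + min (λ A) (λ B)`. -/
theorem statement1 {V E : Type} [Fintype V] [Fintype E] (F : E → Finset V)
    (A B : Finset E) :
    itw F (A ∪ B) ≤
      max (itw F A) (itw F B) +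
        (min (lamIn F Finset.univ A) (lamIn F Finset.univ B) : ℤ) :=
  statement1_general F A B

end Paper
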